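/- arXiv:2408.02383 — 3 statements merged into one kernel-verified Lean document; each statement's English description precedes it below -/
import Mathlib

section
/- Let U be an encoding for g₁,…,g_p with scalars μ₁,…,μ_p. Then for every error element e, setting s := (⟨g₁,e⟩,…,⟨g_p,e⟩) ∈ (Fin p → ZMod d), there exists a family of unitary d^{N−p} × d^{N−p} matrices (T_x)_{x ∈ Fin p → ZMod d} (indexed by Fin (N−p) → ZMod d) such that for all x, x', k, k': the ((x',k'),(x,k)) entry of U† W(e) U equals (T_{x+s})_{k',k} if x' = x + s, and 0 otherwise. -/
/-!
Writing `ω ^ m.val` as the standard additive character of `ZMod d`, the Weyl operators satisfy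
`W(g) W(e) = ω^⟨g,e⟩ W(e) W(g)`. Hence `W(e)` maps a `μ_j ω^{x_j}`-eigenvector of the unitary
`W(g_j)` to a `μ_j ω^{x_j + s_j}`-eigenvector, and eigenvectors of a unitary matrix for distinct
eigenvalues are orthogonal. So the unitary matrix `U† W(e) U` vanishes outside the blocks
`(x + s, x)`, and a unitary matrix supported on the blocks of the graph of a permutation has
unitary blocks.
-/

open Matrix Complex

noncomputable section

/-- ω = exp(2πi/d). -/
def omga (d : ℕ) : ℂ := Complex.exp (2 * Real.pi * Complex.I / d)

/-- The Weyl operator W_{k,l}: (j,j') entry is ω^{jk} if j' = j + l, else 0. -/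
def weyl (d : ℕ) (k l : ZMod d) : Matrix (ZMod d) (ZMod d) ℂ :=
  Matrix.of fun j j' => if j' = j + l then omga d ^ (j * k).val else 0

/-- N-fold Kronecker product W(e), indexed by Fin N → ZMod d. -/
def weylN (d N : ℕ) (e : (Fin N → ZMod d) × (Fin N → ZMod d)) :
    Matrix (Fin N → ZMod d) (Fin N → ZMod d) ℂ :=
  Matrix.of fun j j' => ∏ n, weyl d (e.1 n) (e.2 n) (j n) (j' n)

/-- Symplectic product ⟨e,f⟩ = Σₙ (lₙ mₙ − kₙ nₙ). -/
def symp (d N : ℕ) (e f : (Fin N → ZMod d) × (Fin N → ZMod d)) : ZMod d :=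
  ∑ n, (e.2 n * f.1 n - e.1 n * f.2 n)

/-- `U` is an encoding for the error elements `g j` with unimodular scalars `μ j`, with
columns indexed by pairs `(x,k)` via the fixed bijection `ι`: each column
`u_{x,k} = U · e_{ι(x,k)}` is an eigenvector of `W(g j)` with eigenvalue `μ j · ω^{x j}`. -/
def IsEncoding (d N p : ℕ) [NeZero d]
    (g : Fin p → (Fin N → ZMod d) × (Fin N → ZMod d)) (μ : Fin p → ℂ)
    (ι : ((Fin p → ZMod d) × (Fin (N - p) → ZMod d)) ≃ (Fin N → ZMod d))
    (U : Matrix (Fin N → ZMod d) (Fin N → ZMod d) ℂ) : Prop :=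
  ∀ (j : Fin p) (x : Fin p → ZMod d) (k : Fin (N - p) → ZMod d),
    (weylN d N (g j)).mulVec (fun r => U r (ι (x, k))) =
      (μ j * omga d ^ (x j).val) • (fun r => U r (ι (x, k)))

lemma omga_pow_val {d : ℕ} [NeZero d] (m : ZMod d) : omga d ^ m.val = ZMod.stdAddChar m := by
  rw [ZMod.stdAddChar_apply, ZMod.toCircle_apply, omga, ← Complex.exp_nat_mul]
  ring_nf

lemma AddChar.map_sum {A M ι : Type*} [AddCommMonoid A] [CommMonoid M] (ψ : AddChar A M)
    (s : Finset ι) (f : ι → A) : ψ (∑ i ∈ s, f i) = ∏ i ∈ s, ψ (f i) := by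
  classical
  induction s using Finset.induction_on with
  | empty => simp
  | insert i s hi ih => rw [Finset.sum_insert hi, Finset.prod_insert hi, ψ.map_add_eq_mul, ih]

section Weyl

open ZMod

variable {d N : ℕ}

lemma symp_eq_dotProduct_sub (f e : (Fin N → ZMod d) × (Fin N → ZMod d)) :
    symp d N f e = f.2 ⬝ᵥ e.1 - f.1 ⬝ᵥ e.2 := by
  simp [symp, dotProduct, Finset.sum_sub_distrib]

variable [NeZero d]

lemma weylN_apply (e : (Fin N → ZMod d) × (Fin N → ZMod d)) (j j' : Fin N → ZMod d) :
    weylN d N e j j' = if j' = j + e.2 then stdAddChar (j ⬝ᵥ e.1) else 0 := by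
  split_ifs with h
  · simp [weylN, weyl, h, dotProduct, AddChar.map_sum, omga_pow_val]
  · obtain ⟨n, hn⟩ := Function.ne_iff.mp h
    have hn' : j' n ≠ j n + e.2 n := hn
    exact Finset.prod_eq_zero (Finset.mem_univ n) (by simp [weyl, hn'])

lemma weylN_mul_apply {α : Type*} (e : (Fin N → ZMod d) × (Fin N → ZMod d))
    (A : Matrix (Fin N → ZMod d) α ℂ) (j : Fin N → ZMod d) (a : α) :
    (weylN d N e * A) j a = stdAddChar (j ⬝ᵥ e.1) * A (j + e.2) a := by
  rw [mul_apply, Finset.sum_eq_single (j + e.2)] <;> simp_all [weylN_apply]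

lemma weylN_mul_weylN (f e : (Fin N → ZMod d) × (Fin N → ZMod d)) :
    weylN d N f * weylN d N e = stdAddChar (symp d N f e) • (weylN d N e * weylN d N f) := by
  ext j j'
  rw [Matrix.smul_apply, weylN_mul_apply, weylN_mul_apply, weylN_apply, weylN_apply,
    add_right_comm j e.2 f.2, symp_eq_dotProduct_sub, smul_eq_mul]
  split_ifs
  · simp only [← AddChar.map_add_eq_mul, add_dotProduct]
    congr 1
    rw [dotProduct_comm f.1 e.2]
    ring
  · simp

lemma weylN_mem_unitaryGroup (e : (Fin N → ZMod d) × (Fin N → ZMod d)) :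
    weylN d N e ∈ unitaryGroup (Fin N → ZMod d) ℂ := by
  rw [mem_unitaryGroup_iff]
  ext j j'
  simp only [weylN_mul_apply, star_apply, weylN_apply, add_left_inj, one_apply]
  split_ifs
  · rw [Complex.star_def, ← AddChar.map_neg_eq_conj, ← AddChar.map_add_eq_mul]
    simp_all
  · simp

end Weyl

namespace Matrix

section Unitary

variable {n 𝕜 : Type*} [Fintype n] [DecidableEq n] [RCLike 𝕜]

lemma star_mulVec_dotProduct_mulVec_of_mem_unitaryGroup {A : Matrix n n 𝕜}
    (hA : A ∈ unitaryGroup n 𝕜) (u v : n → 𝕜) : star (A *ᵥ u) ⬝ᵥ (A *ᵥ v) = star u ⬝ᵥ v := by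
  rw [star_mulVec, dotProduct_mulVec, vecMul_vecMul, ← star_eq_conjTranspose,
    mem_unitaryGroup_iff'.mp hA, vecMul_one]

open scoped ComplexOrder in
lemma star_dotProduct_eq_zero_of_mem_unitaryGroup {A : Matrix n n 𝕜} (hA : A ∈ unitaryGroup n 𝕜)
    {u v : n → 𝕜} {a b : 𝕜} (hu : A *ᵥ u = a • u) (hv : A *ᵥ v = b • v) (hab : a ≠ b) :
    star u ⬝ᵥ v = 0 := by
  by_contra h
  have hrel : ∀ w c, A *ᵥ w = c • w → star u ⬝ᵥ w = star a * c * (star u ⬝ᵥ w) := by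
    intro w c hw
    calc star u ⬝ᵥ w = star (A *ᵥ u) ⬝ᵥ (A *ᵥ w) :=
          (star_mulVec_dotProduct_mulVec_of_mem_unitaryGroup hA u w).symm
      _ = star a * c * (star u ⬝ᵥ w) := by
          rw [hu, hw, star_smul, smul_dotProduct, dotProduct_smul, smul_eq_mul, smul_eq_mul,
            mul_assoc]
  have hu0 : star u ⬝ᵥ u ≠ 0 := by
    rw [Ne, dotProduct_star_self_eq_zero]
    rintro rfl
    simp at h
  have haa : star a * a = 1 := by
    simpa using (mul_right_cancel₀ hu0 ((one_mul _).trans (hrel u a hu))).symm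
  have hab' : star a * b = 1 := by
    simpa using (mul_right_cancel₀ h ((one_mul _).trans (hrel v b hv))).symm
  exact hab (mul_left_cancel₀ (left_ne_zero_of_mul_eq_one haa) (haa.trans hab'.symm))

end Unitary

section Blocks

variable {α κ R : Type*}

def shiftedBlock (M : Matrix (α × κ) (α × κ) R) (σ : Equiv.Perm α) (b : α) : Matrix κ κ R :=
  of fun k' k => M (b, k') (σ.symm b, k)

lemma apply_eq_ite_shiftedBlock [DecidableEq α] [Zero R] {M : Matrix (α × κ) (α × κ) R}
    {σ : Equiv.Perm α}
    (hM : ∀ a a' k k', a' ≠ σ a → M (a', k') (a, k) = 0) (a a' : α) (k k' : κ) :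
    M (a', k') (a, k) = if a' = σ a then shiftedBlock M σ (σ a) k' k else 0 := by
  split_ifs with h
  · simp [shiftedBlock, h]
  · exact hM a a' k k' h

lemma shiftedBlock_mem_unitaryGroup [Fintype α] [DecidableEq α] [Fintype κ] [DecidableEq κ]
    [CommRing R] [StarRing R] {M : Matrix (α × κ) (α × κ) R}
    (hU : M ∈ unitaryGroup (α × κ) R) {σ : Equiv.Perm α}
    (hM : ∀ a a' k k', a' ≠ σ a → M (a', k') (a, k) = 0) (b : α) :
    shiftedBlock M σ b ∈ unitaryGroup κ R := by
  rw [mem_unitaryGroup_iff'] at hU ⊢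
  ext k' k
  have hentry := congr_fun (congr_fun hU (σ.symm b, k')) (σ.symm b, k)
  rw [mul_apply, Fintype.sum_prod_type, Finset.sum_eq_single b] at hentry
  · simpa [shiftedBlock, mul_apply, one_apply] using hentry
  · intro a _ hab
    refine Finset.sum_eq_zero fun m _ => ?_
    rw [hM (σ.symm b) a k m (by simpa using hab), mul_zero]
  · simp

end Blocks

lemma submatrix_mem_unitaryGroup {m n R : Type*} [Fintype m] [DecidableEq m] [Fintype n]
    [DecidableEq n] [CommRing R] [StarRing R] {A : Matrix n n R} (hA : A ∈ unitaryGroup n R)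
    (e : m ≃ n) : A.submatrix e e ∈ unitaryGroup m R := by
  rw [mem_unitaryGroup_iff'] at hA ⊢
  rw [star_eq_conjTranspose, conjTranspose_submatrix, submatrix_mul_equiv,
    ← star_eq_conjTranspose, hA, submatrix_one_equiv]

lemma conjTranspose_mul_mul_apply {n R : Type*} [Fintype n] [CommRing R] [StarRing R]
    (U A : Matrix n n R) (i j : n) :
    (Uᴴ * A * U) i j = star (fun r => U r i) ⬝ᵥ A *ᵥ (fun r => U r j) := by
  rw [Matrix.mul_assoc]
  rfl

lemma mulVec_mulVec_eq_smul_of_mul_eq_smul_mul {n R : Type*} [Fintype n] [CommRing R]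
    {A B : Matrix n n R} {c a : R} (hAB : A * B = c • (B * A)) {v : n → R}
    (hv : A *ᵥ v = a • v) : A *ᵥ (B *ᵥ v) = (c * a) • (B *ᵥ v) := by
  rw [mulVec_mulVec, hAB, smul_mulVec, ← mulVec_mulVec, hv, mulVec_smul, smul_smul]

end Matrix

theorem encoding_error_action_general
    (d N p : ℕ) [NeZero d]
    (g : Fin p → (Fin N → ZMod d) × (Fin N → ZMod d))
    (μ : Fin p → ℂ) (hμ : ∀ j, ‖μ j‖ = 1)
    (ι : ((Fin p → ZMod d) × (Fin (N - p) → ZMod d)) ≃ (Fin N → ZMod d))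
    (U : Matrix (Fin N → ZMod d) (Fin N → ZMod d) ℂ)
    (hU : U ∈ Matrix.unitaryGroup (Fin N → ZMod d) ℂ)
    (hEnc : IsEncoding d N p g μ ι U)
    (e : (Fin N → ZMod d) × (Fin N → ZMod d)) :
    ∃ T : (Fin p → ZMod d) →
        Matrix (Fin (N - p) → ZMod d) (Fin (N - p) → ZMod d) ℂ,
      (∀ x, T x ∈ Matrix.unitaryGroup (Fin (N - p) → ZMod d) ℂ) ∧
      ∀ (x x' : Fin p → ZMod d) (k k' : Fin (N - p) → ZMod d),
        (Uᴴ * weylN d N e * U) (ι (x', k')) (ι (x, k)) =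
          if x' = x + (fun j => symp d N (g j) e)
          then T (x + fun j => symp d N (g j) e) k' k else 0 := by
  set s : Fin p → ZMod d := fun j => symp d N (g j) e
  set M := (Uᴴ * weylN d N e * U).submatrix ι ι
  have hM : M ∈ unitaryGroup _ ℂ := submatrix_mem_unitaryGroup
    (mul_mem (mul_mem (Unitary.star_mem hU) (weylN_mem_unitaryGroup e)) hU) ι
  have hshift : ∀ x x' k k', x' ≠ Equiv.addRight s x → M (x', k') (x, k) = 0 := by
    intro x x' k k' hne
    obtain ⟨j, hj⟩ := Function.ne_iff.mp hne
    have hμj : μ j ≠ 0 := norm_ne_zero_iff.mp (by simp [hμ j])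
    refine (conjTranspose_mul_mul_apply _ _ _ _).trans <|
      star_dotProduct_eq_zero_of_mem_unitaryGroup (weylN_mem_unitaryGroup (g j)) (hEnc j x' k')
        (mulVec_mulVec_eq_smul_of_mul_eq_smul_mul (weylN_mul_weylN (g j) e) (hEnc j x k)) ?_
    rw [omga_pow_val, omga_pow_val, mul_left_comm, ← AddChar.map_add_eq_mul, Ne,
      mul_right_inj' hμj, ZMod.injective_stdAddChar.eq_iff, add_comm]
    exact hj
  exact ⟨shiftedBlock M (Equiv.addRight s), shiftedBlock_mem_unitaryGroup hM hshift,
    apply_eq_ite_shiftedBlock hshift⟩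

/-- block decomposition of U† W(e) U for an encoding U: there is a family of
unitary action operators (T_x) such that the ((x',k'),(x,k)) entry of U† W(e) U equals
(T_{x+s})_{k',k} if x' = x + s (with s_j = ⟨g_j,e⟩), and 0 otherwise. -/
theorem encoding_error_action
    (d N p : ℕ) [NeZero d] (hd : d.Prime) (hN : 1 ≤ N) (hp : p ≤ N)
    (g : Fin p → (Fin N → ZMod d) × (Fin N → ZMod d))
    (μ : Fin p → ℂ) (hμ : ∀ j, ‖μ j‖ = 1)
    (ι : ((Fin p → ZMod d) × (Fin (N - p) → ZMod d)) ≃ (Fin N → ZMod d))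
    (U : Matrix (Fin N → ZMod d) (Fin N → ZMod d) ℂ)
    (hU : U ∈ Matrix.unitaryGroup (Fin N → ZMod d) ℂ)
    (hEnc : IsEncoding d N p g μ ι U)
    (e : (Fin N → ZMod d) × (Fin N → ZMod d)) :
    ∃ T : (Fin p → ZMod d) →
        Matrix (Fin (N - p) → ZMod d) (Fin (N - p) → ZMod d) ℂ,
      (∀ x, T x ∈ Matrix.unitaryGroup (Fin (N - p) → ZMod d) ℂ) ∧
      ∀ (x x' : Fin p → ZMod d) (k k' : Fin (N - p) → ZMod d),
        (Uᴴ * weylN d N e * U) (ι (x', k')) (ι (x, k)) =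
          if x' = x + (fun j => symp d N (g j) e)
          then T (x + fun j => symp d N (g j) e) k' k else 0 :=
  encoding_error_action_general d N p g μ hμ ι U hU hEnc e

end
end

section
/- Let U be an encoding for g₁,…,g_p with scalars μ₁,…,μ_p, and assume ⟨g_i, g_j⟩ = 0 for all i, j (so the W(g_j) pairwise commute). Let e be an error element with s = (⟨g_j,e⟩)_j, and let (T^e_x)_x and (T^{e+g_j}_x)_x be the families realizing the block decompositions of U† W(e) U and U† W(e+g_j) U (note e and e+g_j have the same vector s of symplectic products). Then for each j ∈ {1,…,p} there exists c ∈ ℂ with |c| = 1 such that T^{e+g_j}_x = c · μ_j ω^{x_j} · T^e_x for all x ∈ (Fin p → ZMod d). -/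
open Matrix Complex

noncomputable section

/-!
Since `W(e) W(g_j) = c · W(e + g_j)` for a phase `c`, conjugating by `U` gives
`(U† W(e) U) (U† W(g_j) U) = c · U† W(e + g_j) U`. The columns of `U` are eigenvectors of
`W(g_j)`, so `U† W(g_j) U` is diagonal with entry `μ_j ω^{x_j}` at `(x, k)`; comparing the
`(x + s, x)` blocks gives `c · T^{e+g_j}_{x+s} = μ_j ω^{x_j} · T^e_{x+s}`, and substituting
`x ↦ x - s` turns `ω^{x_j}` into `ω^{-s_j} ω^{x_j}`, which is absorbed into the phase.
-/

lemma norm_omga_pow (d m : ℕ) : ‖omga d ^ m‖ = 1 := by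
  have h : omga d = Complex.exp ((2 * Real.pi / d : ℝ) * Complex.I) := by
    rw [omga]; push_cast; congr 1; ring
  rw [norm_pow, h, Complex.norm_exp_ofReal_mul_I, one_pow]

lemma omga_pow_self (d : ℕ) [NeZero d] : omga d ^ d = 1 := by
  have hd : (d : ℂ) ≠ 0 := Nat.cast_ne_zero.mpr (NeZero.ne d)
  rw [omga, ← Complex.exp_nat_mul, mul_div_cancel₀ _ hd, Complex.exp_two_pi_mul_I]

lemma omga_pow_val_add (d : ℕ) [NeZero d] (a b : ZMod d) :
    omga d ^ (a + b).val = omga d ^ a.val * omga d ^ b.val := by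
  rw [ZMod.val_add, ← pow_add]
  conv_rhs => rw [← Nat.div_add_mod (a.val + b.val) d]
  rw [pow_add, pow_mul, omga_pow_self, one_pow, one_mul]

lemma weyl_mul (d : ℕ) [NeZero d] (k l k' l' : ZMod d) :
    weyl d k l * weyl d k' l' = (omga d ^ (l * k').val) • weyl d (k + k') (l + l') := by
  ext j j''
  simp only [Matrix.mul_apply, weyl, Matrix.of_apply, Matrix.smul_apply, smul_eq_mul]
  rw [Finset.sum_eq_single (j + l) (fun b _ hb => by simp [hb]) (by simp), if_pos rfl,
    ← add_assoc]
  split_ifs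
  · rw [add_mul, mul_add, omga_pow_val_add, omga_pow_val_add]
    ring
  · simp

def weylCocycle (d N : ℕ) (e f : (Fin N → ZMod d) × (Fin N → ZMod d)) : ℂ :=
  ∏ n, omga d ^ (e.2 n * f.1 n).val

lemma norm_weylCocycle (d N : ℕ) (e f : (Fin N → ZMod d) × (Fin N → ZMod d)) :
    ‖weylCocycle d N e f‖ = 1 := by
  rw [weylCocycle, norm_prod]
  exact Finset.prod_eq_one fun n _ => norm_omga_pow _ _

lemma weylN_mul (d N : ℕ) [NeZero d] (e f : (Fin N → ZMod d) × (Fin N → ZMod d)) :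
    weylN d N e * weylN d N f = weylCocycle d N e f • weylN d N (e + f) := by
  ext a b
  calc (weylN d N e * weylN d N f) a b
      = ∏ n, ∑ t : ZMod d, weyl d (e.1 n) (e.2 n) (a n) t * weyl d (f.1 n) (f.2 n) t (b n) := by
        simp only [Matrix.mul_apply, weylN, Matrix.of_apply, ← Finset.prod_mul_distrib]
        rw [Finset.prod_univ_sum, Fintype.piFinset_univ]
    _ = ∏ n, (weyl d (e.1 n) (e.2 n) * weyl d (f.1 n) (f.2 n)) (a n) (b n) := by
        simp only [Matrix.mul_apply]
    _ = (weylCocycle d N e f • weylN d N (e + f)) a b := by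
        simp only [weyl_mul, weylCocycle, weylN, Matrix.smul_apply, Matrix.of_apply,
          smul_eq_mul, Finset.prod_mul_distrib, Prod.fst_add, Prod.snd_add, Pi.add_apply]

section Conjugation

variable {n R : Type*} [Fintype n] [DecidableEq n] [CommSemiring R] [StarRing R]

lemma conj_mul_conj {U : Matrix n n R} (hU : U * Uᴴ = 1) (A B : Matrix n n R) :
    Uᴴ * A * U * (Uᴴ * B * U) = Uᴴ * (A * B) * U := by
  simp only [Matrix.mul_assoc, ← Matrix.mul_assoc U Uᴴ, hU, Matrix.one_mul]

lemma mul_conj_apply_of_mulVec_col_eq_smul {U : Matrix n n R} (hU : Uᴴ * U = 1)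
    {A : Matrix n n R} {i : n} {c : R} (hA : A *ᵥ (fun r => U r i) = c • fun r => U r i)
    (M : Matrix n n R) (a : n) :
    (M * (Uᴴ * A * U)) a i = M a i * c := by
  have hcol : ∀ r, (A * U) r i = c * U r i := fun r => by
    simpa [Matrix.mulVec, dotProduct, Matrix.mul_apply] using congrFun hA r
  rw [Matrix.mul_assoc, ← Matrix.mul_assoc, Matrix.mul_apply]
  simp only [hcol, mul_left_comm _ c, ← Finset.mul_sum]
  rw [← Matrix.mul_apply, Matrix.mul_assoc, hU, Matrix.mul_one, mul_comm]

end Conjugation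

lemma weylCocycle_mul_conj_weylN_add_apply (d N : ℕ) [NeZero d]
    {U : Matrix (Fin N → ZMod d) (Fin N → ZMod d) ℂ}
    (hU : U ∈ Matrix.unitaryGroup (Fin N → ZMod d) ℂ)
    (e f : (Fin N → ZMod d) × (Fin N → ZMod d)) {i : Fin N → ZMod d} {c : ℂ}
    (hf : weylN d N f *ᵥ (fun r => U r i) = c • fun r => U r i) (a : Fin N → ZMod d) :
    weylCocycle d N e f * (Uᴴ * weylN d N (e + f) * U) a i =
      (Uᴴ * weylN d N e * U) a i * c := by
  rw [← mul_conj_apply_of_mulVec_col_eq_smul (Matrix.mem_unitaryGroup_iff'.mp hU) hf,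
    conj_mul_conj (Matrix.mem_unitaryGroup_iff.mp hU), weylN_mul, Matrix.mul_smul,
    Matrix.smul_mul, Matrix.smul_apply, smul_eq_mul]

theorem encoding_coset_error_action_general
    (d N p : ℕ) [NeZero d]
    (g : Fin p → (Fin N → ZMod d) × (Fin N → ZMod d))
    (μ : Fin p → ℂ)
    (ι : ((Fin p → ZMod d) × (Fin (N - p) → ZMod d)) ≃ (Fin N → ZMod d))
    (U : Matrix (Fin N → ZMod d) (Fin N → ZMod d) ℂ)
    (hU : U ∈ Matrix.unitaryGroup (Fin N → ZMod d) ℂ)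
    (hEnc : IsEncoding d N p g μ ι U)
    (e : (Fin N → ZMod d) × (Fin N → ZMod d))
    (s : Fin p → ZMod d)
    (Te : (Fin p → ZMod d) →
      Matrix (Fin (N - p) → ZMod d) (Fin (N - p) → ZMod d) ℂ)
    (Tg : Fin p → (Fin p → ZMod d) →
      Matrix (Fin (N - p) → ZMod d) (Fin (N - p) → ZMod d) ℂ)
    (hTe : ∀ (x x' : Fin p → ZMod d) (k k' : Fin (N - p) → ZMod d),
      (Uᴴ * weylN d N e * U) (ι (x', k')) (ι (x, k)) =
        if x' = x + s then Te (x + s) k' k else 0)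
    (hTg : ∀ (j : Fin p) (x x' : Fin p → ZMod d) (k k' : Fin (N - p) → ZMod d),
      (Uᴴ * weylN d N (e + g j) * U) (ι (x', k')) (ι (x, k)) =
        if x' = x + s then Tg j (x + s) k' k else 0) :
    ∀ j : Fin p, ∃ c : ℂ, ‖c‖ = 1 ∧
      ∀ x : Fin p → ZMod d,
        Tg j x = (c * μ j * omga d ^ (x j).val) • Te x := by
  intro j
  set c := weylCocycle d N e (g j)
  have hc : c ≠ 0 := norm_ne_zero_iff.mp (by rw [norm_weylCocycle]; exact one_ne_zero)
  refine ⟨c⁻¹ * omga d ^ (-s j).val, ?_, fun y => ?_⟩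
  · rw [norm_mul, norm_inv, norm_weylCocycle, inv_one, one_mul, norm_omga_pow]
  ext k' k
  have hblock := weylCocycle_mul_conj_weylN_add_apply d N hU e (g j) (hEnc j (y - s) k)
    (ι (y, k'))
  rw [hTe, hTg, sub_add_cancel, if_pos rfl, if_pos rfl, Pi.sub_apply, sub_eq_neg_add,
    omga_pow_val_add] at hblock
  rw [Matrix.smul_apply, smul_eq_mul]
  apply mul_left_cancel₀ hc
  rw [hblock]
  field_simp

/-- errors differing by a generator have the same action up to the phase
c · μ_j ω^{x_j}: if (T^e_x) realizes U† W(e) U and (T^{e+g_j}_x) realizes U† W(e+g_j) U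
(both with shift vector s = (⟨g_j,e⟩)_j, using ⟨g_i,g_j⟩ = 0), then for each j there is a
unimodular c with T^{e+g_j}_x = c · μ_j ω^{x_j} · T^e_x for all x. -/
theorem encoding_coset_error_action
    (d N p : ℕ) [NeZero d] (hd : d.Prime) (hN : 1 ≤ N) (hp : p ≤ N)
    (g : Fin p → (Fin N → ZMod d) × (Fin N → ZMod d))
    (μ : Fin p → ℂ) (hμ : ∀ j, ‖μ j‖ = 1)
    (hcomm : ∀ i j, symp d N (g i) (g j) = 0)
    (ι : ((Fin p → ZMod d) × (Fin (N - p) → ZMod d)) ≃ (Fin N → ZMod d))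
    (U : Matrix (Fin N → ZMod d) (Fin N → ZMod d) ℂ)
    (hU : U ∈ Matrix.unitaryGroup (Fin N → ZMod d) ℂ)
    (hEnc : IsEncoding d N p g μ ι U)
    (e : (Fin N → ZMod d) × (Fin N → ZMod d))
    (s : Fin p → ZMod d) (hs : s = fun j => symp d N (g j) e)
    (Te : (Fin p → ZMod d) →
      Matrix (Fin (N - p) → ZMod d) (Fin (N - p) → ZMod d) ℂ)
    (Tg : Fin p → (Fin p → ZMod d) →
      Matrix (Fin (N - p) → ZMod d) (Fin (N - p) → ZMod d) ℂ)
    (hTe : ∀ (x x' : Fin p → ZMod d) (k k' : Fin (N - p) → ZMod d),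
      (Uᴴ * weylN d N e * U) (ι (x', k')) (ι (x, k)) =
        if x' = x + s then Te (x + s) k' k else 0)
    (hTg : ∀ (j : Fin p) (x x' : Fin p → ZMod d) (k k' : Fin (N - p) → ZMod d),
      (Uᴴ * weylN d N (e + g j) * U) (ι (x', k')) (ι (x, k)) =
        if x' = x + s then Tg j (x + s) k' k else 0) :
    ∀ j : Fin p, ∃ c : ℂ, ‖c‖ = 1 ∧
      ∀ x : Fin p → ZMod d,
        Tg j x = (c * μ j * omga d ^ (x j).val) • Te x :=
  encoding_coset_error_action_general d N p g μ ι U hU hEnc e s Te Tg hTe hTg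
end
end

section
/- Let d be a prime and fix (a, b) ∈ (ZMod d)². Let Ω₀ := d^{−1/2} Σ_{i ∈ ZMod d} e_i ⊗ e_i ∈ ℂ^{ZMod d} ⊗ ℂ^{ZMod d} and Ω_{a,b} := (W_{a,b} ⊗ 1) Ω₀. Then the family of vectors { (W_{k,l} ⊗ 1) Ω_{a,b} : (k,l) ∈ (ZMod d)² } is an orthonormal basis of ℂ^{ZMod d} ⊗ ℂ^{ZMod d}. -/
open Matrix Complex Kronecker

noncomputable section

/-- The maximally entangled unit vector Ω₀ = d^{−1/2} Σ_i e_i ⊗ e_i ∈ ℂ^{ZMod d} ⊗ ℂ^{ZMod d}. -/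
def bell0 (d : ℕ) : (ZMod d × ZMod d) → ℂ :=
  fun q => if q.1 = q.2 then (((Real.sqrt d)⁻¹ : ℝ) : ℂ) else 0

/-- The shifted Bell vectors (W_{k,l} ⊗ 1)(W_{a,b} ⊗ 1)Ω₀. -/
noncomputable def bellShift (d : ℕ) [NeZero d] (a b : ZMod d) (kl : ZMod d × ZMod d) :
    (ZMod d × ZMod d) → ℂ :=
  (weyl d kl.1 kl.2 ⊗ₖ (1 : Matrix (ZMod d) (ZMod d) ℂ)).mulVec
    ((weyl d a b ⊗ₖ (1 : Matrix (ZMod d) (ZMod d) ℂ)).mulVec (bell0 d))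

/-! Write `ψ m = ω ^ m.val`, the standard additive character of `ZMod d`. The vector
`(W_{k,l} ⊗ 1) Ω_{a,b}` is supported on the pairs `(j, j + l + b)`, where it equals
`d^{-1/2} ψ (j k + (j + l) a)`. Vectors with different `l` thus have disjoint supports, and for
equal `l` the inner product is `d⁻¹ Σ_j ψ (j (k₂ - k₁))`, which vanishes for `k₁ ≠ k₂` because `ψ`
is primitive. The `d²` orthonormal vectors then span the `d²`-dimensional space. -/

open ZMod

lemma omga_pow_val_eq_stdAddChar (d : ℕ) [NeZero d] (m : ZMod d) :
    omga d ^ m.val = stdAddChar m := by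
  rw [stdAddChar_apply, toCircle_apply, omga, ← Complex.exp_nat_mul]
  ring_nf

lemma star_stdAddChar_mul_stdAddChar {N : ℕ} [NeZero N] (x y : ZMod N) :
    star (stdAddChar x) * stdAddChar y = stdAddChar (y - x) := by
  rw [stdAddChar_apply, RCLike.star_def, ← Circle.coe_inv_eq_conj, ← AddChar.map_neg_eq_inv,
    ← stdAddChar_apply, ← AddChar.map_add_eq_mul, neg_add_eq_sub]

lemma kroneckerMap_one_mulVec_apply {R m n p : Type*} [Semiring R] [Fintype n] [Fintype p]
    [DecidableEq p] (M : Matrix m n R) (v : n × p → R) (i : m) (j : p) :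
    ((M ⊗ₖ (1 : Matrix p p R)) *ᵥ v) (i, j) = ∑ k, M i k * v (k, j) := by
  simp [Matrix.mulVec, dotProduct, Fintype.sum_prod_type, Matrix.one_apply]

lemma weyl_kronecker_one_mulVec_apply (d : ℕ) [NeZero d] (k l : ZMod d)
    (v : ZMod d × ZMod d → ℂ) (j j' : ZMod d) :
    ((weyl d k l ⊗ₖ (1 : Matrix (ZMod d) (ZMod d) ℂ)) *ᵥ v) (j, j') =
      stdAddChar (j * k) * v (j + l, j') := by
  simp [kroneckerMap_one_mulVec_apply, weyl, omga_pow_val_eq_stdAddChar]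

lemma bellShift_apply (d : ℕ) [NeZero d] (a b k l j j' : ZMod d) :
    bellShift d a b (k, l) (j, j') =
      if j + l + b = j' then
        ((Real.sqrt d)⁻¹ : ℝ) * stdAddChar (j * k + (j + l) * a) else 0 := by
  simp only [bellShift, weyl_kronecker_one_mulVec_apply, bell0, AddChar.map_add_eq_mul]
  split_ifs <;> ring

lemma star_bellShift_dotProduct (d : ℕ) [NeZero d] (a b k₁ l₁ k₂ l₂ : ZMod d) :
    star (bellShift d a b (k₁, l₁)) ⬝ᵥ bellShift d a b (k₂, l₂) =
      if l₁ = l₂ then (d : ℂ)⁻¹ * ∑ j : ZMod d, stdAddChar (j * (k₂ - k₁)) else 0 := by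
  have hsqrt : (((Real.sqrt d)⁻¹ : ℝ) : ℂ) * (((Real.sqrt d)⁻¹ : ℝ) : ℂ) = (d : ℂ)⁻¹ := by
    rw [← Complex.ofReal_mul, ← mul_inv, Real.mul_self_sqrt (Nat.cast_nonneg d)]
    push_cast; rfl
  simp only [dotProduct, Fintype.sum_prod_type, Pi.star_apply, bellShift_apply,
    apply_ite (star : ℂ → ℂ), star_zero, mul_ite, mul_zero, Finset.sum_ite_eq, Finset.mem_univ,
    if_true, add_left_inj, add_right_inj]
  split_ifs with hl
  · subst hl
    rw [Finset.mul_sum]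
    refine Finset.sum_congr rfl fun j _ => ?_
    rw [star_mul', mul_mul_mul_comm, star_stdAddChar_mul_stdAddChar, Complex.star_def,
      Complex.conj_ofReal, hsqrt]
    ring_nf
  · simp only [zero_mul, Finset.sum_const_zero]

lemma star_bellShift_dotProduct_eq_ite (d : ℕ) [NeZero d] (a b : ZMod d)
    (pq qr : ZMod d × ZMod d) :
    star (bellShift d a b pq) ⬝ᵥ bellShift d a b qr = if pq = qr then 1 else 0 := by
  obtain ⟨k₁, l₁⟩ := pq
  obtain ⟨k₂, l₂⟩ := qr
  rw [star_bellShift_dotProduct, AddChar.sum_mulShift _ (isPrimitive_stdAddChar d), ZMod.card]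
  have hd : (d : ℂ) ≠ 0 := Nat.cast_ne_zero.mpr (NeZero.ne d)
  simp only [sub_eq_zero, Prod.mk.injEq, @eq_comm _ k₂ k₁]
  split_ifs <;> simp_all

theorem span_range_eq_top_of_star_dotProduct_eq_ite {𝕜 ι n : Type*} [RCLike 𝕜] [Fintype ι]
    [Fintype n] [DecidableEq ι] (v : ι → n → 𝕜)
    (hv : ∀ i j, star (v i) ⬝ᵥ v j = if i = j then 1 else 0)
    (hcard : Fintype.card ι = Fintype.card n) :
    Submodule.span 𝕜 (Set.range v) = ⊤ := by
  have horth : Orthonormal 𝕜 fun i => WithLp.toLp 2 (v i) := by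
    rw [orthonormal_iff_ite]
    intro i j
    rw [EuclideanSpace.inner_toLp_toLp, dotProduct_comm, hv]
  have hli : LinearIndependent 𝕜 v :=
    horth.linearIndependent.of_comp (WithLp.linearEquiv 2 𝕜 (n → 𝕜)).symm.toLinearMap
  exact hli.span_eq_top_of_card_eq_finrank' (by simp [hcard])

theorem shifted_bell_basis_general
    (d : ℕ) [NeZero d] (a b : ZMod d) :
    (∀ pq qr : ZMod d × ZMod d,
      star (bellShift d a b pq) ⬝ᵥ bellShift d a b qr = if pq = qr then 1 else 0) ∧
    Submodule.span ℂ (Set.range (bellShift d a b)) = ⊤ :=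
  ⟨star_bellShift_dotProduct_eq_ite d a b,
    span_range_eq_top_of_star_dotProduct_eq_ite _ (star_bellShift_dotProduct_eq_ite d a b) rfl⟩

/-- for prime d and any (a,b), the family {(W_{k,l} ⊗ 1)Ω_{a,b}} is an
orthonormal basis of ℂ^{ZMod d} ⊗ ℂ^{ZMod d}. -/
theorem shifted_bell_basis
    (d : ℕ) [NeZero d] (hd : d.Prime) (a b : ZMod d) :
    (∀ pq qr : ZMod d × ZMod d,
      star (bellShift d a b pq) ⬝ᵥ bellShift d a b qr = if pq = qr then 1 else 0) ∧
    Submodule.span ℂ (Set.range (bellShift d a b)) = ⊤ :=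
  shifted_bell_basis_general d a b

end
end
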